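/- Let A, A0, B be real n×n matrices such that A0 is symmetric positive definite, the pair (A, A0) satisfies hypothesis (H0) with constants (c0, c1), and the pair (Bᵀ, A0) satisfies hypothesis (H0) with constants (β0, β1). Define Z = B A0⁻¹ Bᵀ. Then Z is symmetric positive definite and the pair (A, Z) satisfies hypothesis (H0) with constants (c0/β1², c1/β0²); that is, vᵀAv ≥ (c0/β1²)·vᵀZv for all v ∈ ℝⁿ, and wᵀAv ≤ (c1/β0²)·√(vᵀZv)·√(wᵀZw) for all v, w ∈ ℝⁿ. -/

import Mathlib

/-!
Write `x = A0⁻¹ Bᵀ v`. Then `A0 x = Bᵀ v` and `vᵀ Z v = xᵀ A0 x = xᵀ Bᵀ v`, so both bounds for `Bᵀ`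
compare `‖x‖_{A0}` with `‖v‖_{A0}`: boundedness gives `‖x‖² ≤ β1 ‖v‖ ‖x‖`, coercivity gives
`β0 ‖v‖² ≤ vᵀ A0 x`, and in both cases `2ab ≤ a² + b²` turns this into the spectral equivalence
`β0² A0 ≤ Z ≤ β1² A0`. Hypothesis (H0) transfers along a spectral equivalence with the constants
rescaled, and `Z` is positive definite because coercivity makes `Bᵀ` injective.
-/

open Matrix

namespace Matrix

variable {ι : Type*} [Fintype ι]

/-- Hypothesis (H0) of the paper for the pair `(M, N)` with constants `(c₀, c₁)`. -/
def CoerciveBounded (M N : Matrix ι ι ℝ) (c₀ c₁ : ℝ) : Prop :=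
  (∀ v, c₀ * (v ⬝ᵥ N *ᵥ v) ≤ v ⬝ᵥ M *ᵥ v) ∧
    ∀ v w, w ⬝ᵥ M *ᵥ v ≤ c₁ * √(v ⬝ᵥ N *ᵥ v) * √(w ⬝ᵥ N *ᵥ w)

theorem CoerciveBounded.of_le_of_le {M N N' : Matrix ι ι ℝ} {c₀ c₁ a b : ℝ}
    (h : CoerciveBounded M N c₀ c₁) (hc₀ : 0 ≤ c₀) (hc₁ : 0 ≤ c₁) (ha : 0 < a) (hb : b ≠ 0)
    (hlow : ∀ v, a ^ 2 * (v ⬝ᵥ N *ᵥ v) ≤ v ⬝ᵥ N' *ᵥ v)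
    (hupp : ∀ v, v ⬝ᵥ N' *ᵥ v ≤ b ^ 2 * (v ⬝ᵥ N *ᵥ v)) :
    CoerciveBounded M N' (c₀ / b ^ 2) (c₁ / a ^ 2) := by
  have hsqrt (v : ι → ℝ) : a * √(v ⬝ᵥ N *ᵥ v) ≤ √(v ⬝ᵥ N' *ᵥ v) := by
    simpa [Real.sqrt_mul (sq_nonneg a), Real.sqrt_sq ha.le] using Real.sqrt_le_sqrt (hlow v)
  refine ⟨fun v => ?_, fun v w => ?_⟩
  · calc c₀ / b ^ 2 * (v ⬝ᵥ N' *ᵥ v) ≤ c₀ / b ^ 2 * (b ^ 2 * (v ⬝ᵥ N *ᵥ v)) := by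
          gcongr; exact hupp v
      _ = c₀ * (v ⬝ᵥ N *ᵥ v) := by field_simp
      _ ≤ v ⬝ᵥ M *ᵥ v := h.1 v
  · calc w ⬝ᵥ M *ᵥ v ≤ c₁ * √(v ⬝ᵥ N *ᵥ v) * √(w ⬝ᵥ N *ᵥ w) := h.2 v w
      _ = c₁ / a ^ 2 * (a * √(v ⬝ᵥ N *ᵥ v)) * (a * √(w ⬝ᵥ N *ᵥ w)) := by field_simp
      _ ≤ c₁ / a ^ 2 * √(v ⬝ᵥ N' *ᵥ v) * √(w ⬝ᵥ N' *ᵥ w) := by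
          gcongr
          exacts [hsqrt v, hsqrt w]

theorem PosSemidef.dotProduct_mulVec_self_nonneg {S : Matrix ι ι ℝ} (hS : S.PosSemidef)
    (x : ι → ℝ) : 0 ≤ x ⬝ᵥ S *ᵥ x := by
  simpa using hS.dotProduct_mulVec_nonneg x

theorem PosSemidef.two_mul_dotProduct_mulVec_le {S : Matrix ι ι ℝ} (hS : S.PosSemidef)
    (x y : ι → ℝ) : 2 * (x ⬝ᵥ S *ᵥ y) ≤ x ⬝ᵥ S *ᵥ x + y ⬝ᵥ S *ᵥ y := by
  have hsymm : y ⬝ᵥ S *ᵥ x = x ⬝ᵥ S *ᵥ y := by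
    rw [dotProduct_mulVec, ← mulVec_transpose, ← conjTranspose_eq_transpose_of_trivial,
      hS.isHermitian.eq, dotProduct_comm]
  have := hS.dotProduct_mulVec_self_nonneg (x - y)
  simp only [mulVec_sub, dotProduct_sub, sub_dotProduct, hsymm] at this
  linarith

theorem PosDef.injective_mulVec_of_coercive {S M : Matrix ι ι ℝ} (hS : S.PosDef) {β : ℝ}
    (hβ : 0 < β) (hcoer : ∀ v, β * (v ⬝ᵥ S *ᵥ v) ≤ v ⬝ᵥ M *ᵥ v) :
    Function.Injective M.mulVec := by
  refine (injective_iff_map_eq_zero M.mulVecLin).2 fun v hv => ?_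
  by_contra hne
  have hpos : 0 < v ⬝ᵥ S *ᵥ v := by simpa using hS.dotProduct_mulVec_pos hne
  have hle := hcoer v
  rw [mulVecLin_apply] at hv
  rw [hv, dotProduct_zero] at hle
  exact (mul_pos hβ hpos).not_ge hle

variable {κ : Type*} [Fintype κ] [DecidableEq ι]

theorem mulVec_nonsing_inv_mulVec {S : Matrix ι ι ℝ} (hS : IsUnit S.det) (u : ι → ℝ) :
    S *ᵥ S⁻¹ *ᵥ u = u := by
  rw [mulVec_mulVec, mul_nonsing_inv S hS, one_mulVec]

theorem dotProduct_mul_inv_mul_transpose_mulVec {S : Matrix ι ι ℝ} (hS : IsUnit S.det)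
    (B : Matrix κ ι ℝ) (v : κ → ℝ) :
    v ⬝ᵥ (B * S⁻¹ * Bᵀ) *ᵥ v = (S⁻¹ *ᵥ Bᵀ *ᵥ v) ⬝ᵥ S *ᵥ (S⁻¹ *ᵥ Bᵀ *ᵥ v) := by
  rw [mulVec_nonsing_inv_mulVec hS, ← mulVec_mulVec, ← mulVec_mulVec,
    dotProduct_mulVec, ← mulVec_transpose, dotProduct_comm]

section SpectralEquivalence

variable {S B : Matrix ι ι ℝ}

theorem sq_mul_le_dotProduct_mul_inv_mul_transpose_mulVec (hS : S.PosDef) {β : ℝ} (hβ : 0 ≤ β)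
    (hcoer : ∀ v, β * (v ⬝ᵥ S *ᵥ v) ≤ v ⬝ᵥ Bᵀ *ᵥ v) (v : ι → ℝ) :
    β ^ 2 * (v ⬝ᵥ S *ᵥ v) ≤ v ⬝ᵥ (B * S⁻¹ * Bᵀ) *ᵥ v := by
  rw [dotProduct_mul_inv_mul_transpose_mulVec hS.det_pos.ne'.isUnit]
  set x := S⁻¹ *ᵥ Bᵀ *ᵥ v
  have hSx : S *ᵥ x = Bᵀ *ᵥ v := mulVec_nonsing_inv_mulVec hS.det_pos.ne'.isUnit _
  have hamgm := hS.posSemidef.two_mul_dotProduct_mulVec_le (β • v) x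
  have hvSx : v ⬝ᵥ S *ᵥ x = v ⬝ᵥ Bᵀ *ᵥ v := by rw [hSx]
  simp only [mulVec_smul, smul_dotProduct, dotProduct_smul, smul_eq_mul, hvSx] at hamgm
  linarith [mul_le_mul_of_nonneg_left (hcoer v) hβ]

theorem dotProduct_mul_inv_mul_transpose_mulVec_le_sq_mul (hS : S.PosDef) {β : ℝ}
    (hbdd : ∀ v w, w ⬝ᵥ Bᵀ *ᵥ v ≤ β * √(v ⬝ᵥ S *ᵥ v) * √(w ⬝ᵥ S *ᵥ w)) (v : ι → ℝ) :
    v ⬝ᵥ (B * S⁻¹ * Bᵀ) *ᵥ v ≤ β ^ 2 * (v ⬝ᵥ S *ᵥ v) := by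
  rw [dotProduct_mul_inv_mul_transpose_mulVec hS.det_pos.ne'.isUnit]
  set x := S⁻¹ *ᵥ Bᵀ *ᵥ v
  have hSx : S *ᵥ x = Bᵀ *ᵥ v := mulVec_nonsing_inv_mulVec hS.det_pos.ne'.isUnit _
  have hamgm := two_mul_le_add_sq (β * √(v ⬝ᵥ S *ᵥ v)) √(x ⬝ᵥ S *ᵥ x)
  rw [mul_pow, Real.sq_sqrt (hS.posSemidef.dotProduct_mulVec_self_nonneg v),
    Real.sq_sqrt (hS.posSemidef.dotProduct_mulVec_self_nonneg x)] at hamgm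
  have hbddx := hbdd v x
  rw [← hSx] at hbddx
  linarith

end SpectralEquivalence

end Matrix

/-- If A0 is symmetric positive definite, (A, A0) satisfies (H0) with
constants (c0, c1) and (Bᵀ, A0) satisfies (H0) with constants (β0, β1), then
Z = B A0⁻¹ Bᵀ is symmetric positive definite and (A, Z) satisfies (H0) with
constants (c0/β1², c1/β0²). -/
theorem stmt_9 {n : ℕ} (A A0 B : Matrix (Fin n) (Fin n) ℝ) (c0 c1 β0 β1 : ℝ)
    (hc0 : 0 < c0) (hc1 : 0 < c1) (hβ0 : 0 < β0) (hβ1 : 0 < β1) (hA0 : A0.PosDef)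
    (hcoerA : ∀ v : Fin n → ℝ, c0 * (v ⬝ᵥ A0.mulVec v) ≤ v ⬝ᵥ A.mulVec v)
    (hbddA : ∀ v w : Fin n → ℝ, w ⬝ᵥ A.mulVec v ≤
      c1 * Real.sqrt (v ⬝ᵥ A0.mulVec v) * Real.sqrt (w ⬝ᵥ A0.mulVec w))
    (hcoerB : ∀ v : Fin n → ℝ, β0 * (v ⬝ᵥ A0.mulVec v) ≤ v ⬝ᵥ Bᵀ.mulVec v)
    (hbddB : ∀ v w : Fin n → ℝ, w ⬝ᵥ Bᵀ.mulVec v ≤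
      β1 * Real.sqrt (v ⬝ᵥ A0.mulVec v) * Real.sqrt (w ⬝ᵥ A0.mulVec w)) :
    letI Z : Matrix (Fin n) (Fin n) ℝ := B * A0⁻¹ * Bᵀ
    Z.PosDef ∧
    (∀ v : Fin n → ℝ, (c0 / β1 ^ 2) * (v ⬝ᵥ Z.mulVec v) ≤ v ⬝ᵥ A.mulVec v) ∧
    (∀ v w : Fin n → ℝ, w ⬝ᵥ A.mulVec v ≤
      (c1 / β0 ^ 2) * Real.sqrt (v ⬝ᵥ Z.mulVec v) * Real.sqrt (w ⬝ᵥ Z.mulVec w)) := by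
  have hB : Function.Injective B.vecMul := by
    rw [← funext (mulVec_transpose B)]
    exact hA0.injective_mulVec_of_coercive hβ0 hcoerB
  have hZ : (B * A0⁻¹ * Bᵀ).PosDef := by
    simpa only [conjTranspose_eq_transpose_of_trivial] using
      hA0.inv.mul_mul_conjTranspose_same hB
  exact ⟨hZ, CoerciveBounded.of_le_of_le ⟨hcoerA, hbddA⟩ hc0.le hc1.le hβ0 hβ1.ne'
    (sq_mul_le_dotProduct_mul_inv_mul_transpose_mulVec hA0 hβ0.le hcoerB)
    (dotProduct_mul_inv_mul_transpose_mulVec_le_sq_mul hA0 hbddB)⟩
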